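/- Let P₁, P₂ be disjoint nonempty compact convex sets in ℝ^d and let B be the bisector B = {x : dist(x, P₁) = dist(x, P₂)}. If there is a unique pair of points realizing the distance between P₁ and P₂, then the restriction of dist(·, P₁) to B attains a unique global minimum on B. -/
import Mathlib

/-- If the distance between two disjoint nonempty compact convex sets is realized by a
unique pair of points, then the distance to P₁ attains a unique global minimum on the
bisector of the two sets. -/
theorem stmt5 {d : ℕ} (P₁ P₂ : Set (EuclideanSpace ℝ (Fin d)))
    (h₁ne : P₁.Nonempty) (h₂ne : P₂.Nonempty)
    (h₁c : IsCompact P₁) (h₂c : IsCompact P₂)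
    (h₁v : Convex ℝ P₁) (h₂v : Convex ℝ P₂)
    (hdisj : Disjoint P₁ P₂)
    (huniq : ∃! q : EuclideanSpace ℝ (Fin d) × EuclideanSpace ℝ (Fin d),
      q.1 ∈ P₁ ∧ q.2 ∈ P₂ ∧ ∀ p₁ ∈ P₁, ∀ p₂ ∈ P₂, dist q.1 q.2 ≤ dist p₁ p₂) :
    ∃! m : EuclideanSpace ℝ (Fin d),
      Metric.infDist m P₁ = Metric.infDist m P₂ ∧
      ∀ x : EuclideanSpace ℝ (Fin d),
        Metric.infDist x P₁ = Metric.infDist x P₂ →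
        Metric.infDist m P₁ ≤ Metric.infDist x P₁ := by
  obtain ⟨⟨x₁, x₂⟩, ⟨hx₁, hx₂, hmin⟩, hu⟩ := huniq
  set D : ℝ := dist x₁ x₂ with hD
  set m : EuclideanSpace ℝ (Fin d) := midpoint ℝ x₁ x₂ with hm
  -- general lower bound on sum of distances
  have key : ∀ x : EuclideanSpace ℝ (Fin d),
      D ≤ Metric.infDist x P₁ + Metric.infDist x P₂ := by
    intro x
    obtain ⟨p₁, hp₁, he₁⟩ := h₁c.exists_infDist_eq_dist h₁ne x
    obtain ⟨p₂, hp₂, he₂⟩ := h₂c.exists_infDist_eq_dist h₂ne x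
    rw [he₁, he₂]
    calc D ≤ dist p₁ p₂ := hmin p₁ hp₁ p₂ hp₂
      _ ≤ dist p₁ x + dist x p₂ := dist_triangle _ _ _
      _ = dist x p₁ + dist x p₂ := by rw [dist_comm p₁ x]
  have hmx₁ : dist m x₁ = D / 2 := by
    rw [hm, dist_comm, dist_left_midpoint]
    simp [hD]
    ring
  have hmx₂ : dist m x₂ = D / 2 := by
    rw [hm, dist_comm, dist_right_midpoint]
    simp [hD]
    ring
  have hle₁ : Metric.infDist m P₁ ≤ D / 2 := by
    calc Metric.infDist m P₁ ≤ dist m x₁ := Metric.infDist_le_dist_of_mem hx₁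
      _ = D / 2 := hmx₁
  have hle₂ : Metric.infDist m P₂ ≤ D / 2 := by
    calc Metric.infDist m P₂ ≤ dist m x₂ := Metric.infDist_le_dist_of_mem hx₂
      _ = D / 2 := hmx₂
  have heq₁ : Metric.infDist m P₁ = D / 2 := by
    have := key m; linarith
  have heq₂ : Metric.infDist m P₂ = D / 2 := by
    have := key m; linarith
  refine ⟨m, ⟨heq₁.trans heq₂.symm, ?_⟩, ?_⟩
  · intro x hx
    have := key x
    rw [hx] at this ⊢
    linarith [heq₂ ▸ heq₁]
  · rintro x ⟨hxB, hxmin⟩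
    -- x is at most D/2 from P₁ (compare with m)
    have hxle : Metric.infDist x P₁ ≤ D / 2 := by
      have := hxmin m (heq₁.trans heq₂.symm)
      linarith [heq₁ ▸ this]
    have hxeq₁ : Metric.infDist x P₁ = D / 2 := by
      have := key x; rw [hxB] at this; linarith [hxB]
    have hxeq₂ : Metric.infDist x P₂ = D / 2 := by rw [← hxB]; exact hxeq₁
    obtain ⟨p₁, hp₁, he₁⟩ := h₁c.exists_infDist_eq_dist h₁ne x
    obtain ⟨p₂, hp₂, he₂⟩ := h₂c.exists_infDist_eq_dist h₂ne x
    have hd₁ : dist x p₁ = D / 2 := by rw [← he₁]; exact hxeq₁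
    have hd₂ : dist x p₂ = D / 2 := by rw [← he₂]; exact hxeq₂
    have hDp : dist p₁ p₂ = D := by
      have h1 : D ≤ dist p₁ p₂ := hmin p₁ hp₁ p₂ hp₂
      have h2 : dist p₁ p₂ ≤ dist p₁ x + dist x p₂ := dist_triangle _ _ _
      rw [dist_comm p₁ x] at h2
      linarith
    have hpmin : ∀ q₁ ∈ P₁, ∀ q₂ ∈ P₂, dist p₁ p₂ ≤ dist q₁ q₂ := by
      intro q₁ hq₁ q₂ hq₂
      rw [hDp]; exact hmin q₁ hq₁ q₂ hq₂
    have hpq : (p₁, p₂) = (x₁, x₂) := hu (p₁, p₂) ⟨hp₁, hp₂, hpmin⟩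
    have hp₁e : p₁ = x₁ := congrArg Prod.fst hpq
    have hp₂e : p₂ = x₂ := congrArg Prod.snd hpq
    subst hp₁e; subst hp₂e
    exact eq_midpoint_of_dist_eq_half
      (by rw [dist_comm p₁ x, hd₁, hDp]) (by rw [hd₂, hDp])
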